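/- Let T > 0, let σ : [0,T] → (0,∞) and q_S, γ_S : [0,T] → ℝ be continuous, let r_G ≥ 0 and μ > 2, and let 𝔎 be the kernel 𝔎(x,y;t,s) = e^{−r_G(t−s)} (4π[𝒮(t)−𝒮(s)])^{−1/2} exp(−(x−y+ℛ(t)−ℛ(s))²/(4[𝒮(t)−𝒮(s)])), where 𝒮(t) = (1/2)∫₀ᵗ σ(τ)² dτ and ℛ(t) = ∫₀ᵗ (q_S(τ) − γ_S(τ) − (1/2)σ(τ)²) dτ. Then for every 0 ≤ s < t ≤ T there exists a constant C = C(t,s,μ,σ,q_S,γ_S,r_G) < ∞ such that for every v ∈ H = L²(ℝ, e^{−μ|x|}dx), the integral (𝔗(t,s)v)(x) = ∫_ℝ 𝔎(x,y;t,s) v(y) dy converges absolutely for almost every x ∈ ℝ, the function 𝔗(t,s)v belongs to H, and ‖𝔗(t,s)v‖_H ≤ C ‖v‖_H. -/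

import Mathlib

/-!
The kernel is `e^{-r_G(t-s)}` times the Gaussian density with mean `ℛ(s) - ℛ(t)` and variance
`2(𝒮(t) - 𝒮(s)) > 0`, so `𝔗(t,s)` is convolution with a function `g` for which
`g(z) e^{μ|z|/2}` is integrable (a Gaussian has all exponential moments).
Conjugating by the weight, `e^{-μ|x|/2} (g ⋆ v)(x) = ∫ k(x,y) e^{-μ|y|/2} v(y) dy` with
`k(x,y) = |g(x-y)| e^{μ(|y|-|x|)/2} ≤ |g(x-y)| e^{μ|x-y|/2}`, so the row and column integrals of `k`
are bounded by `C = ∫ |g(z)| e^{μ|z|/2} dz`, and the Schur test gives `‖g ⋆ v‖_H ≤ C ‖v‖_H`.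
-/
open Real Set MeasureTheory intervalIntegral

/-- `𝒮(t) = (1/2)∫₀ᵗ σ(τ)² dτ`. -/
noncomputable def Sfun (sigma : ℝ → ℝ) (t : ℝ) : ℝ :=
  (1/2) * ∫ τ in (0:ℝ)..t, (sigma τ) ^ 2

/-- `ℛ(t) = ∫₀ᵗ (q_S(τ) − γ_S(τ) − (1/2)σ(τ)²) dτ`. -/
noncomputable def Rfun (sigma qS gammaS : ℝ → ℝ) (t : ℝ) : ℝ :=
  ∫ τ in (0:ℝ)..t, (qS τ - gammaS τ - (1/2) * (sigma τ) ^ 2)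

/-- The kernel
`𝔎(x,y;t,s) = e^{−r_G(t−s)} (4π[𝒮(t)−𝒮(s)])^{−1/2}
  exp(−(x−y+ℛ(t)−ℛ(s))²/(4[𝒮(t)−𝒮(s)]))`
of the evolutionary family generated by the Black–Scholes operator minus `r_G`. -/
noncomputable def Kker (sigma qS gammaS : ℝ → ℝ) (rG : ℝ) (x y t s : ℝ) : ℝ :=
  Real.exp (-rG * (t - s)) / Real.sqrt (4 * Real.pi * (Sfun sigma t - Sfun sigma s))
    * Real.exp (-((x - y + Rfun sigma qS gammaS t - Rfun sigma qS gammaS s) ^ 2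
        / (4 * (Sfun sigma t - Sfun sigma s))))

open ProbabilityTheory Function
open scoped ENNReal NNReal

theorem ENNReal.sq_lintegral_mul_le {α : Type*} [MeasurableSpace α] {μ : Measure α}
    {k f : α → ℝ≥0∞} (hk : AEMeasurable k μ) (hf : AEMeasurable f μ) :
    (∫⁻ x, k x * f x ∂μ) ^ 2 ≤ (∫⁻ x, k x ∂μ) * ∫⁻ x, k x * f x ^ 2 ∂μ := by
  have hsplit : ∀ x, k x * f x = k x ^ (2⁻¹ : ℝ) * (k x * f x ^ 2) ^ (2⁻¹ : ℝ) := fun x => by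
    rw [← ENNReal.mul_rpow_of_nonneg _ _ (by norm_num), ← mul_assoc, ← sq, ← mul_pow]
    exact (ENNReal.pow_rpow_inv_natCast two_ne_zero _).symm
  calc (∫⁻ x, k x * f x ∂μ) ^ 2
      ≤ ((∫⁻ x, k x ∂μ) ^ (2⁻¹ : ℝ) * (∫⁻ x, k x * f x ^ 2 ∂μ) ^ (2⁻¹ : ℝ)) ^ 2 := by
        simp only [hsplit]
        gcongr
        exact ENNReal.lintegral_mul_norm_pow_le hk (hk.mul (hf.pow_const 2)) (by norm_num)
          (by norm_num) (by norm_num)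
    _ = (∫⁻ x, k x ∂μ) * ∫⁻ x, k x * f x ^ 2 ∂μ := by
        rw [← ENNReal.mul_rpow_of_nonneg _ _ (by norm_num)]
        exact ENNReal.rpow_inv_natCast_pow two_ne_zero _

theorem lintegral_sq_lintegral_mul_le_of_schur {α β : Type*} [MeasurableSpace α]
    [MeasurableSpace β] {μ : Measure α} {ν : Measure β} [SFinite μ] [SFinite ν]
    {k : α → β → ℝ≥0∞} {f : β → ℝ≥0∞} (hk : Measurable (uncurry k)) (hf : AEMeasurable f ν)
    {A B : ℝ≥0∞} (hA : ∀ x, ∫⁻ y, k x y ∂ν ≤ A) (hB : ∀ y, ∫⁻ x, k x y ∂μ ≤ B) :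
    ∫⁻ x, (∫⁻ y, k x y * f y ∂ν) ^ 2 ∂μ ≤ A * B * ∫⁻ y, f y ^ 2 ∂ν := by
  have hkf : AEMeasurable (uncurry fun x y => k x y * f y ^ 2) (μ.prod ν) :=
    hk.aemeasurable.mul (hf.pow_const 2).comp_snd
  calc ∫⁻ x, (∫⁻ y, k x y * f y ∂ν) ^ 2 ∂μ
      ≤ ∫⁻ x, A * ∫⁻ y, k x y * f y ^ 2 ∂ν ∂μ := lintegral_mono fun x =>
        (ENNReal.sq_lintegral_mul_le hk.of_uncurry_left.aemeasurable hf).trans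
          (mul_le_mul_left (hA x) _)
    _ = A * ∫⁻ y, (∫⁻ x, k x y ∂μ) * f y ^ 2 ∂ν := by
        rw [lintegral_const_mul'' _ hkf.lintegral_prod_right, lintegral_lintegral_swap hkf]
        simp_rw [lintegral_mul_const'' _ hk.of_uncurry_right.aemeasurable]
    _ ≤ A * (B * ∫⁻ y, f y ^ 2 ∂ν) := by
        rw [← lintegral_const_mul'' _ (hf.pow_const 2)]
        gcongr with y
        exact hB y
    _ = A * B * ∫⁻ y, f y ^ 2 ∂ν := (mul_assoc _ _ _).symm

theorem eLpNorm_two_sq {α E : Type*} [MeasurableSpace α] [NormedAddCommGroup E] (f : α → E)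
    (μ : Measure α) :
    eLpNorm f 2 μ ^ 2 = ∫⁻ x, ‖f x‖ₑ ^ 2 ∂μ := by
  simpa using eLpNorm_nnreal_pow_eq_lintegral (f := f) (μ := μ) (p := 2) two_ne_zero

noncomputable def expWeightedVolume (mu : ℝ) : Measure ℝ :=
  volume.withDensity fun x => ENNReal.ofReal (exp (-mu * |x|))

theorem volume_absolutelyContinuous_expWeightedVolume (mu : ℝ) :
    volume ≪ expWeightedVolume mu :=
  withDensity_absolutelyContinuous' (by fun_prop) (ae_of_all _ fun _ => by positivity)

theorem expWeightedVolume_absolutelyContinuous (mu : ℝ) : expWeightedVolume mu ≪ volume :=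
  withDensity_absolutelyContinuous _ _

theorem lintegral_expWeightedVolume (mu : ℝ) {f : ℝ → ℝ≥0∞} (hf : AEMeasurable f) :
    ∫⁻ x, f x ∂expWeightedVolume mu = ∫⁻ x, ENNReal.ofReal (exp (-mu * |x|)) * f x :=
  lintegral_withDensity_eq_lintegral_mul₀ (by fun_prop) hf

theorem ofReal_exp_neg_half_mul_abs_sq (mu x : ℝ) :
    ENNReal.ofReal (exp (-(mu / 2) * |x|)) ^ 2 = ENNReal.ofReal (exp (-mu * |x|)) := by
  rw [← ENNReal.ofReal_pow (exp_pos _).le, ← exp_nat_mul]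
  ring_nf

theorem exp_mul_abs_sub_abs_le {a : ℝ} (ha : 0 ≤ a) (x y : ℝ) :
    exp (a * (|y| - |x|)) ≤ exp (a * |x - y|) :=
  exp_le_exp.2 (mul_le_mul_of_nonneg_left
    (by linarith [abs_sub_abs_le_abs_sub y x, abs_sub_comm x y]) ha)

theorem ofReal_exp_mul_abs_sub_abs_mul (a x y : ℝ) :
    ENNReal.ofReal (exp (a * (|y| - |x|))) * ENNReal.ofReal (exp (-a * |y|)) =
      ENNReal.ofReal (exp (-a * |x|)) := by
  rw [← ENNReal.ofReal_mul (exp_pos _).le, ← exp_add]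
  ring_nf

theorem lintegral_expWeightedVolume_sq_lintegral_conv_le {g : ℝ → ℝ} (hg : Measurable g)
    {mu : ℝ} (hmu : 0 ≤ mu) {f : ℝ → ℝ≥0∞} (hf : AEMeasurable f) :
    ∫⁻ x, (∫⁻ y, ‖g (x - y)‖ₑ * f y) ^ 2 ∂expWeightedVolume mu ≤
      (∫⁻ z, ‖g z * exp (mu / 2 * |z|)‖ₑ) ^ 2 * ∫⁻ y, f y ^ 2 ∂expWeightedVolume mu := by
  set C := ∫⁻ z, ‖g z * exp (mu / 2 * |z|)‖ₑ
  let e : ℝ → ℝ≥0∞ := fun x => ENNReal.ofReal (exp (-(mu / 2) * |x|))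
  let k : ℝ → ℝ → ℝ≥0∞ := fun x y => ‖g (x - y)‖ₑ * ENNReal.ofReal (exp (mu / 2 * (|y| - |x|)))
  have hk_le : ∀ x y, k x y ≤ ‖g (x - y) * exp (mu / 2 * |x - y|)‖ₑ := fun x y => by
    rw [enorm_mul, Real.enorm_of_nonneg (exp_pos _).le]
    exact mul_le_mul_right (ENNReal.ofReal_le_ofReal (exp_mul_abs_sub_abs_le (by positivity) x y)) _
  have hk : Measurable (uncurry k) := by fun_prop
  have hφ : Measurable fun z => ‖g z * exp (mu / 2 * |z|)‖ₑ := by fun_prop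
  have hrow : ∀ x, ∫⁻ y, k x y ≤ C := fun x =>
    (lintegral_mono (hk_le x)).trans_eq
      ((Measure.measurePreserving_sub_left volume x).lintegral_comp hφ)
  have hcol : ∀ y, ∫⁻ x, k x y ≤ C := fun y =>
    (lintegral_mono (hk_le · y)).trans_eq
      ((measurePreserving_sub_right volume y).lintegral_comp hφ)
  have hconj : ∀ x, ENNReal.ofReal (exp (-mu * |x|)) * (∫⁻ y, ‖g (x - y)‖ₑ * f y) ^ 2 =
      (∫⁻ y, k x y * (e y * f y)) ^ 2 := fun x => by
    have : ∀ y, k x y * (e y * f y) = e x * (‖g (x - y)‖ₑ * f y) := fun y => by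
      simp only [k, e, ← ofReal_exp_mul_abs_sub_abs_mul (mu / 2) x y]
      ring
    rw [lintegral_congr this, lintegral_const_mul' _ _ ENNReal.ofReal_ne_top, mul_pow,
      ofReal_exp_neg_half_mul_abs_sq]
  calc ∫⁻ x, (∫⁻ y, ‖g (x - y)‖ₑ * f y) ^ 2 ∂expWeightedVolume mu
      = ∫⁻ x, (∫⁻ y, k x y * (e y * f y)) ^ 2 := by
        rw [lintegral_expWeightedVolume mu (by fun_prop)]
        exact lintegral_congr hconj
    _ ≤ C * C * ∫⁻ y, (e y * f y) ^ 2 :=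
        lintegral_sq_lintegral_mul_le_of_schur hk (by fun_prop) hrow hcol
    _ = C ^ 2 * ∫⁻ y, f y ^ 2 ∂expWeightedVolume mu := by
        rw [lintegral_expWeightedVolume mu (by fun_prop), sq C]
        simp_rw [mul_pow, e, ofReal_exp_neg_half_mul_abs_sq]

section Convolution

variable {g : ℝ → ℝ} {mu : ℝ} {v : ℝ → ℝ}

theorem aestronglyMeasurable_of_memLp_expWeightedVolume {p : ℝ≥0∞}
    (hv : MemLp v p (expWeightedVolume mu)) : AEStronglyMeasurable v :=
  hv.1.mono_ac (volume_absolutelyContinuous_expWeightedVolume mu)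

theorem lintegral_expWeightedVolume_sq_lintegral_conv_enorm_le (hg : Measurable g) (hmu : 0 ≤ mu)
    (hv : MemLp v 2 (expWeightedVolume mu)) :
    ∫⁻ x, (∫⁻ y, ‖g (x - y)‖ₑ * ‖v y‖ₑ) ^ 2 ∂expWeightedVolume mu ≤
      ((∫⁻ z, ‖g z * exp (mu / 2 * |z|)‖ₑ) * eLpNorm v 2 (expWeightedVolume mu)) ^ 2 := by
  rw [mul_pow, eLpNorm_two_sq]
  exact lintegral_expWeightedVolume_sq_lintegral_conv_le hg hmu
    (aestronglyMeasurable_of_memLp_expWeightedVolume hv).aemeasurable.enorm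

theorem ae_integrable_conv (hg : Measurable g) (hmu : 0 ≤ mu)
    (hgint : Integrable fun z => g z * exp (mu / 2 * |z|))
    (hv : MemLp v 2 (expWeightedVolume mu)) :
    ∀ᵐ x, Integrable fun y => g (x - y) * v y := by
  have hv_ae := aestronglyMeasurable_of_memLp_expWeightedVolume hv
  have hfin : ∫⁻ x, (∫⁻ y, ‖g (x - y)‖ₑ * ‖v y‖ₑ) ^ 2 ∂expWeightedVolume mu ≠ ∞ :=
    ((lintegral_expWeightedVolume_sq_lintegral_conv_enorm_le hg hmu hv).trans_lt
      (ENNReal.pow_lt_top (ENNReal.mul_lt_top hgint.2 hv.2))).ne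
  have hkv : AEMeasurable (uncurry fun x y => ‖g (x - y)‖ₑ * ‖v y‖ₑ) (volume.prod volume) :=
    (by fun_prop : Measurable (uncurry fun x y => ‖g (x - y)‖ₑ)).aemeasurable.mul
      hv_ae.enorm.comp_snd
  have hF := (hkv.lintegral_prod_right.pow_const 2).mono_ac
    (expWeightedVolume_absolutelyContinuous mu)
  filter_upwards [volume_absolutelyContinuous_expWeightedVolume mu (ae_lt_top' hF hfin)]
    with x hx
  refine ⟨(by fun_prop : Measurable fun y => g (x - y)).aestronglyMeasurable.mul hv_ae, ?_⟩
  simpa [HasFiniteIntegral, enorm_mul] using hx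

theorem aestronglyMeasurable_conv (hg : Measurable g) (hv : MemLp v 2 (expWeightedVolume mu)) :
    AEStronglyMeasurable (fun x => ∫ y, g (x - y) * v y) (expWeightedVolume mu) := by
  have hprod : AEStronglyMeasurable (fun p : ℝ × ℝ => g (p.1 - p.2) * v p.2) (volume.prod volume) :=
    (by fun_prop : Measurable fun p : ℝ × ℝ => g (p.1 - p.2)).aestronglyMeasurable.mul
      (aestronglyMeasurable_of_memLp_expWeightedVolume hv).comp_snd
  exact hprod.integral_prod_right'.mono_ac (expWeightedVolume_absolutelyContinuous mu)

theorem eLpNorm_conv_le (hg : Measurable g) (hmu : 0 ≤ mu) (hv : MemLp v 2 (expWeightedVolume mu)) :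
    eLpNorm (fun x => ∫ y, g (x - y) * v y) 2 (expWeightedVolume mu) ≤
      (∫⁻ z, ‖g z * exp (mu / 2 * |z|)‖ₑ) * eLpNorm v 2 (expWeightedVolume mu) := by
  rw [← ENNReal.pow_le_pow_left_iff two_ne_zero, eLpNorm_two_sq]
  refine le_trans (lintegral_mono fun x => ?_)
    (lintegral_expWeightedVolume_sq_lintegral_conv_enorm_le hg hmu hv)
  gcongr
  simpa only [enorm_mul] using enorm_integral_le_lintegral_enorm fun y => g (x - y) * v y

theorem exists_bound_conv (hg : Measurable g) (hmu : 0 ≤ mu)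
    (hgint : Integrable fun z => g z * exp (mu / 2 * |z|)) :
    ∃ C : ℝ, 0 ≤ C ∧ ∀ v : ℝ → ℝ, MemLp v 2 (expWeightedVolume mu) →
      (∀ᵐ x, Integrable fun y => g (x - y) * v y) ∧
      MemLp (fun x => ∫ y, g (x - y) * v y) 2 (expWeightedVolume mu) ∧
      eLpNorm (fun x => ∫ y, g (x - y) * v y) 2 (expWeightedVolume mu) ≤
        ENNReal.ofReal C * eLpNorm v 2 (expWeightedVolume mu) := by
  refine ⟨(∫⁻ z, ‖g z * exp (mu / 2 * |z|)‖ₑ).toReal, ENNReal.toReal_nonneg, fun v hv => ?_⟩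
  rw [ENNReal.ofReal_toReal hgint.2.ne]
  have hbound := eLpNorm_conv_le hg hmu hv
  exact ⟨ae_integrable_conv hg hmu hgint hv,
    ⟨aestronglyMeasurable_conv hg hv, hbound.trans_lt (ENNReal.mul_lt_top hgint.2 hv.2)⟩, hbound⟩

end Convolution

theorem integrable_gaussianPDFReal_mul_exp_mul_abs (m : ℝ) {v : ℝ≥0} (hv : v ≠ 0) (a : ℝ) :
    Integrable fun z => gaussianPDFReal m v z * exp (a * |z|) := by
  have h := integrable_exp_mul_abs (X := id) (integrable_exp_mul_gaussianReal (μ := m) (v := v) a)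
    (integrable_exp_mul_gaussianReal (-a))
  rw [gaussianReal_of_var_ne_zero _ hv, integrable_withDensity_iff (measurable_gaussianPDF _ _)
    (ae_of_all _ fun _ => gaussianPDF_lt_top)] at h
  simpa [toReal_gaussianPDF, mul_comm] using h

theorem Sfun_sub_eq {sigma : ℝ → ℝ} {s t : ℝ} (hs : 0 ≤ s) (hst : s ≤ t)
    (hc : ContinuousOn sigma (Icc 0 t)) :
    Sfun sigma t - Sfun sigma s = (1 / 2) * ∫ τ in s..t, sigma τ ^ 2 := by
  have hint : ∀ u ∈ Icc 0 t, IntervalIntegrable (fun τ => sigma τ ^ 2) volume 0 u := fun u hu =>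
    ((hc.pow 2).mono (by rw [uIcc_of_le hu.1]; exact Icc_subset_Icc_right hu.2)).intervalIntegrable
  rw [Sfun, Sfun, ← mul_sub, integral_interval_sub_left (hint t ⟨hs.trans hst, le_rfl⟩)
    (hint s ⟨hs, hst⟩)]

theorem Sfun_sub_pos {sigma : ℝ → ℝ} {s t : ℝ} (hs : 0 ≤ s) (hst : s < t)
    (hc : ContinuousOn sigma (Icc 0 t)) (hpos : ∀ τ ∈ Ioo s t, 0 < sigma τ) :
    0 < Sfun sigma t - Sfun sigma s := by
  have hint : IntervalIntegrable (fun τ => sigma τ ^ 2) volume s t :=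
    ((hc.pow 2).mono (by rw [uIcc_of_le hst.le]; exact Icc_subset_Icc_left hs)).intervalIntegrable
  rw [Sfun_sub_eq hs hst.le hc]
  exact mul_pos one_half_pos
    (intervalIntegral_pos_of_pos_on hint (fun τ hτ => pow_pos (hpos τ hτ) 2) hst)

theorem Kker_eq_mul_gaussianPDFReal {sigma qS gammaS : ℝ → ℝ} {s t : ℝ}
    (hS : 0 < Sfun sigma t - Sfun sigma s) (rG x y : ℝ) :
    Kker sigma qS gammaS rG x y t s = exp (-rG * (t - s)) *
      gaussianPDFReal (Rfun sigma qS gammaS s - Rfun sigma qS gammaS t)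
        (2 * (Sfun sigma t - Sfun sigma s)).toNNReal (x - y) := by
  have hvar : 2 * π * (2 * (Sfun sigma t - Sfun sigma s)) =
      4 * π * (Sfun sigma t - Sfun sigma s) := by ring
  rw [Kker, gaussianPDFReal, Real.coe_toNNReal _ (by positivity), hvar]
  ring_nf

theorem stmt_15_general (T : ℝ) (sigma qS gammaS : ℝ → ℝ)
    (hsigmac : ContinuousOn sigma (Set.Icc 0 T))
    (hsigmapos : ∀ t ∈ Set.Icc (0:ℝ) T, 0 < sigma t)
    (rG : ℝ) (mu : ℝ) (hmu : 2 < mu)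
    (s t : ℝ) (hs : 0 ≤ s) (hst : s < t) (htT : t ≤ T) :
    ∃ C : ℝ, 0 ≤ C ∧ ∀ v : ℝ → ℝ,
      MeasureTheory.MemLp v 2
        (MeasureTheory.volume.withDensity
          (fun x : ℝ => ENNReal.ofReal (Real.exp (-mu * |x|)))) →
      (∀ᵐ x : ℝ,
        MeasureTheory.Integrable (fun y : ℝ => Kker sigma qS gammaS rG x y t s * v y)) ∧
      MeasureTheory.MemLp (fun x : ℝ => ∫ y : ℝ, Kker sigma qS gammaS rG x y t s * v y) 2
        (MeasureTheory.volume.withDensity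
          (fun x : ℝ => ENNReal.ofReal (Real.exp (-mu * |x|)))) ∧
      MeasureTheory.eLpNorm
          (fun x : ℝ => ∫ y : ℝ, Kker sigma qS gammaS rG x y t s * v y) 2
          (MeasureTheory.volume.withDensity
            (fun x : ℝ => ENNReal.ofReal (Real.exp (-mu * |x|))))
        ≤ ENNReal.ofReal C *
          MeasureTheory.eLpNorm v 2
            (MeasureTheory.volume.withDensity
              (fun x : ℝ => ENNReal.ofReal (Real.exp (-mu * |x|)))) := by
  have hS : 0 < Sfun sigma t - Sfun sigma s :=
    Sfun_sub_pos hs hst (hsigmac.mono (Icc_subset_Icc_right htT))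
      fun τ hτ => hsigmapos τ ⟨hs.trans hτ.1.le, hτ.2.le.trans htT⟩
  have hvar : (2 * (Sfun sigma t - Sfun sigma s)).toNNReal ≠ 0 := by simp [hS]
  simp only [Kker_eq_mul_gaussianPDFReal hS]
  refine exists_bound_conv (mu := mu)
    (g := fun z => exp (-rG * (t - s)) * gaussianPDFReal _ _ z) (by fun_prop) (by linarith) ?_
  simpa only [mul_assoc] using
    (integrable_gaussianPDFReal_mul_exp_mul_abs _ hvar (mu / 2)).const_mul (exp (-rG * (t - s)))

/-- Each operator `𝔗(t,s)` of the evolutionary family, given by integration against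
the kernel `𝔎(·,·;t,s)`, is a bounded linear integral operator on the weighted space
`H = L²(ℝ, e^{−μ|x|}dx)`: the defining integral converges absolutely for a.e. `x`,
maps `H` into `H`, and `‖𝔗(t,s)v‖_H ≤ C ‖v‖_H`. -/
theorem stmt_15 (T : ℝ) (hT : 0 < T) (sigma qS gammaS : ℝ → ℝ)
    (hsigmac : ContinuousOn sigma (Set.Icc 0 T))
    (hsigmapos : ∀ t ∈ Set.Icc (0:ℝ) T, 0 < sigma t)
    (hqc : ContinuousOn qS (Set.Icc 0 T)) (hgc : ContinuousOn gammaS (Set.Icc 0 T))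
    (rG : ℝ) (hrG : 0 ≤ rG) (mu : ℝ) (hmu : 2 < mu)
    (s t : ℝ) (hs : 0 ≤ s) (hst : s < t) (htT : t ≤ T) :
    ∃ C : ℝ, 0 ≤ C ∧ ∀ v : ℝ → ℝ,
      MeasureTheory.MemLp v 2
        (MeasureTheory.volume.withDensity
          (fun x : ℝ => ENNReal.ofReal (Real.exp (-mu * |x|)))) →
      (∀ᵐ x : ℝ,
        MeasureTheory.Integrable (fun y : ℝ => Kker sigma qS gammaS rG x y t s * v y)) ∧
      MeasureTheory.MemLp (fun x : ℝ => ∫ y : ℝ, Kker sigma qS gammaS rG x y t s * v y) 2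
        (MeasureTheory.volume.withDensity
          (fun x : ℝ => ENNReal.ofReal (Real.exp (-mu * |x|)))) ∧
      MeasureTheory.eLpNorm
          (fun x : ℝ => ∫ y : ℝ, Kker sigma qS gammaS rG x y t s * v y) 2
          (MeasureTheory.volume.withDensity
            (fun x : ℝ => ENNReal.ofReal (Real.exp (-mu * |x|))))
        ≤ ENNReal.ofReal C *
          MeasureTheory.eLpNorm v 2
            (MeasureTheory.volume.withDensity
              (fun x : ℝ => ENNReal.ofReal (Real.exp (-mu * |x|)))) :=
  stmt_15_general T sigma qS gammaS hsigmac hsigmapos rG mu hmu s t hs hst htT
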